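/- Dual Agmon estimate for high-energy modes: let K ≥ 3 be even, Hφ = μφ on ℓ²((Z/KZ)^d) with 0 ≤ v_n ≤ V_max, δ > 0 and μ ≥ 4d + δ. Let ũ be the dual landscape (H̃ũ = 1 with H̃ = -Δ + V_max - V) and h̃_n the Agmon distance to J̃_δ(μ̃) = {n : 1/ũ_n ≤ 4d + V_max - μ + δ} for weight (1/ũ_n - μ̃)_+. Then for the same constants C, C_0 as in the low-energy Agmon theorem, for 0 < α < 1/√(Cd): Σ_{h̃_n ≥ 1} e^{2αh̃_n} φ_n² ≤ (C_0/δ) Σ_{n∈M} φ_n². -/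

import Mathlib

attribute [local instance] Classical.propDecidable

open Finset Real

noncomputable section

/-- The `i`-th standard basis vector in the discrete torus `(ZMod K)^d`. -/
def e (d K : ℕ) (i : Fin d) : Fin d → ZMod K :=
  fun j => if j = i then 1 else 0

/-- The periodic discrete Schrödinger operator `H = -Δ + V` on `(ZMod K)^d`. -/
def opH (d K : ℕ) (v φ : (Fin d → ZMod K) → ℝ) (n : Fin d → ZMod K) : ℝ :=
  (∑ i : Fin d, (2 * φ n - φ (n + e d K i) - φ (n - e d K i))) + v n * φ n

/-- `m` and `n` are nearest neighbors on the torus: `|m - n|₁ = 1`. -/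
def adj (d K : ℕ) (m n : Fin d → ZMod K) : Prop :=
  ∃ i : Fin d, m = n + e d K i ∨ m = n - e d K i

/-- The Agmon (semi-)metric associated to a weight `w`:
`ρ(n,m) = inf over unit-step paths γ from n to m of
  ∑_j ln(1 + √(min{w(γ_j), w(γ_{j+1})}))`. -/
def rho (d K : ℕ) (w : (Fin d → ZMod K) → ℝ) (n m : Fin d → ZMod K) : ℝ :=
  sInf {s : ℝ | ∃ (k : ℕ) (γ : ℕ → Fin d → ZMod K),
    γ 0 = n ∧ γ k = m ∧ (∀ j < k, adj d K (γ (j + 1)) (γ j)) ∧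
    s = ∑ j ∈ Finset.range k,
      Real.log (1 + Real.sqrt (min (w (γ j)) (w (γ (j + 1)))))}

/-- The Agmon distance to a region `J`: `h_n = inf_{m ∈ J} ρ(n, m)`. -/
def agmonDist (d K : ℕ) (w : (Fin d → ZMod K) → ℝ)
    (J : Set (Fin d → ZMod K)) (n : Fin d → ZMod K) : ℝ :=
  sInf {s : ℝ | ∃ m ∈ J, s = rho d K w n m}

/-!
Since `K` is even, the torus is bipartite and the staggered sign `s n = (-1) ^ (n₁ + ⋯ + n_d)`
turns an eigenfunction `φ` of `H` with eigenvalue `μ` into an eigenfunction `s φ` of `H̃` with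
eigenvalue `μ̃ = 4d + V_max - μ`, so it suffices to prove the low-energy Agmon estimate for `H̃`.

Green's identity and `H̃ ũ = 1` give, for every `f`, the landscape energy inequality
`∑ (1/ũ - μ̃) (f ψ)² ≤ ∑_edges ψ_n ψ_m (f_m - f_n)²`. For `f = e^{α h̃}` the Agmon distance is
Lipschitz along each edge for the weight `ln (1 + √w)`, so every edge term is at most
`α² w e^{2α h̃} ψ²` at either endpoint. On `J̃` the weight is at most `V_max` and `h̃ = 0`, while
off `J̃` we have `1/ũ - μ̃ = w > δ`; hence for `α² d < 1` the edge terms are absorbed into the left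
side. The constant `C = 1` works.
-/

lemma sum_comp_add_right {G M : Type*} [AddGroup G] [Fintype G] [AddCommMonoid M] (g : G → M)
    (a : G) : ∑ x, g (x + a) = ∑ x, g x :=
  Equiv.sum_comp (Equiv.addRight a) g

lemma exp_mul_le_one_add_mul {α s a : ℝ} (hα0 : 0 ≤ α) (hα1 : α ≤ 1) (hs : 0 ≤ s)
    (ha : a ≤ log (1 + s)) : exp (α * a) ≤ 1 + α * s :=
  calc exp (α * a) ≤ exp (α * log (1 + s)) := exp_le_exp.mpr (mul_le_mul_of_nonneg_left ha hα0)
    _ = (1 + s) ^ α := by rw [rpow_def_of_pos (by linarith), mul_comm]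
    _ ≤ 1 + α * s := rpow_one_add_le_one_add_mul_self (by linarith) hα0 hα1

lemma abs_exp_sub_one_le_exp_abs_sub_one (u : ℝ) : |exp u - 1| ≤ exp |u| - 1 := by
  rcases le_total 0 u with hu | hu
  · rw [abs_of_nonneg hu, abs_of_nonneg (by linarith [add_one_le_exp u])]
  · rw [abs_of_nonpos hu, abs_of_nonpos (by linarith [exp_le_one_iff.mpr hu])]
    linarith [add_one_le_exp u, add_one_le_exp (-u)]

lemma sq_exp_mul_sub_exp_mul_le {α t x y : ℝ} (hα0 : 0 ≤ α) (hα1 : α ≤ 1) (ht : 0 ≤ t)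
    (hxy : |x - y| ≤ log (1 + √t)) :
    (exp (α * x) - exp (α * y)) ^ 2 ≤ α ^ 2 * t * exp (2 * α * y) := by
  have hbound : |exp (α * x) - exp (α * y)| ≤ exp (α * y) * (α * √t) :=
    calc |exp (α * x) - exp (α * y)| = exp (α * y) * |exp (α * (x - y)) - 1| := by
          rw [← abs_of_pos (exp_pos (α * y)), ← abs_mul, abs_of_pos (exp_pos _), mul_sub,
            ← exp_add, mul_one]
          ring_nf
      _ ≤ exp (α * y) * (exp |α * (x - y)| - 1) := by
          gcongr; exact abs_exp_sub_one_le_exp_abs_sub_one _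
      _ ≤ exp (α * y) * (α * √t) := by
          rw [abs_mul, abs_of_nonneg hα0]
          gcongr
          linarith [exp_mul_le_one_add_mul hα0 hα1 (sqrt_nonneg t) hxy]
  calc (exp (α * x) - exp (α * y)) ^ 2 = |exp (α * x) - exp (α * y)| ^ 2 := (sq_abs _).symm
    _ ≤ (exp (α * y) * (α * √t)) ^ 2 := by gcongr
    _ = α ^ 2 * t * exp (2 * α * y) := by
        rw [mul_pow, mul_pow, sq_sqrt ht, sq, ← exp_add]; ring_nf

lemma sq_mul_lt_one_of_lt_one_div_sqrt {α x : ℝ} (hx : 0 < x) (hα : 0 ≤ α) (h : α < 1 / √x) :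
    α ^ 2 * x < 1 := by
  rw [lt_div_iff₀ (sqrt_pos.mpr hx)] at h
  calc α ^ 2 * x = (α * √x) ^ 2 := by rw [mul_pow, sq_sqrt hx.le]
    _ < 1 := pow_lt_one₀ (by positivity) h two_ne_zero

-- The absorption step, with `q = 1/u - μ`, `F = e^{2αh}` and `p = ψ²`.
lemma sum_tail_le_of_energy_le {ι : Type*} [Fintype ι] {q F p : ι → ℝ} {s : Finset ι}
    {V δ k : ℝ} (hk0 : 0 ≤ k) (hk : k ≤ 1) (hδ : 0 ≤ δ) (hp : ∀ n, 0 ≤ p n) (hF : ∀ n, 0 ≤ F n)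
    (hq : ∀ n, |q n| ≤ V) (hF1 : ∀ n, q n ≤ δ → F n = 1) (hs : ∀ n ∈ s, δ < q n)
    (henergy : ∑ n, q n * F n * p n ≤ k * ∑ n, max (q n) 0 * F n * p n) :
    δ * (1 - k) * ∑ n ∈ s, F n * p n ≤ (1 + k) * V * ∑ n, p n := by
  set X := ∑ n ∈ univ.filter (fun n => q n ≤ δ), V * p n
  set S := ∑ n ∈ univ.filter (fun n => ¬q n ≤ δ), q n * F n * p n
  have hVp : ∀ n, 0 ≤ V * p n := fun n => mul_nonneg ((abs_nonneg _).trans (hq n)) (hp n)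
  have hlow : -X + S ≤ ∑ n, q n * F n * p n := by
    rw [← sum_filter_add_sum_filter_not _ fun n => q n ≤ δ, ← sum_neg_distrib]
    refine add_le_add (sum_le_sum fun n hn => ?_) le_rfl
    rw [hF1 n (mem_filter.mp hn).2, mul_one]
    nlinarith [neg_abs_le (q n), hq n, hp n]
  have hup : ∑ n, max (q n) 0 * F n * p n ≤ X + S := by
    rw [← sum_filter_add_sum_filter_not _ fun n => q n ≤ δ]
    refine add_le_add (sum_le_sum fun n hn => ?_) (le_of_eq (sum_congr rfl fun n hn => ?_))
    · rw [hF1 n (mem_filter.mp hn).2, mul_one]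
      exact mul_le_mul_of_nonneg_right (max_le ((le_abs_self _).trans (hq n))
        ((abs_nonneg _).trans (hq n))) (hp n)
    · rw [max_eq_left (by linarith [not_le.mp (mem_filter.mp hn).2])]
  have htail : δ * ∑ n ∈ s, F n * p n ≤ S := by
    rw [mul_sum]
    calc ∑ n ∈ s, δ * (F n * p n) ≤ ∑ n ∈ s, q n * F n * p n :=
          sum_le_sum fun n hn => by
            rw [← mul_assoc]; exact mul_le_mul_of_nonneg_right
              (mul_le_mul_of_nonneg_right (hs n hn).le (hF n)) (hp n)
      _ ≤ S := sum_le_sum_of_subset_of_nonneg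
          (fun n hn => mem_filter.mpr ⟨mem_univ n, not_le.mpr (hs n hn)⟩)
          fun n hn _ => mul_nonneg (mul_nonneg (hδ.trans (not_le.mp (mem_filter.mp hn).2).le)
            (hF n)) (hp n)
  have hX : X ≤ V * ∑ n, p n := by
    rw [mul_sum]; exact sum_le_sum_of_subset_of_nonneg (filter_subset _ _) fun n _ _ => hVp n
  nlinarith [mul_le_mul_of_nonneg_left htail (sub_nonneg.mpr hk)]

-- `sInf ∅ = 0` in `ℝ`, so an empty `B` must come with an empty `A`.
lemma sInf_le_add_sInf {A B : Set ℝ} {c : ℝ} (hc : 0 ≤ c) (hA : BddBelow A)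
    (hne : A.Nonempty → B.Nonempty) (h : ∀ b ∈ B, ∃ a ∈ A, a ≤ c + b) :
    sInf A ≤ c + sInf B := by
  rcases B.eq_empty_or_nonempty with rfl | hB
  · rw [Set.not_nonempty_iff_eq_empty.mp (mt hne Set.not_nonempty_empty), Real.sInf_empty]
    simpa using hc
  · have : sInf A - c ≤ sInf B := le_csInf hB fun b hb => by
      obtain ⟨a, ha, hab⟩ := h b hb
      linarith [csInf_le hA ha]
    linarith

section Agmon

variable {d K : ℕ} {w : (Fin d → ZMod K) → ℝ}

lemma adj_symm {m n : Fin d → ZMod K} (h : adj d K m n) : adj d K n m := by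
  obtain ⟨i, rfl | rfl⟩ := h
  · exact ⟨i, Or.inr (add_sub_cancel_right n _).symm⟩
  · exact ⟨i, Or.inl (sub_add_cancel n _).symm⟩

variable (d K w) in
def agmonPathLengths (n m : Fin d → ZMod K) : Set ℝ :=
  {s : ℝ | ∃ (k : ℕ) (γ : ℕ → Fin d → ZMod K),
    γ 0 = n ∧ γ k = m ∧ (∀ j < k, adj d K (γ (j + 1)) (γ j)) ∧
    s = ∑ j ∈ range k, log (1 + √(min (w (γ j)) (w (γ (j + 1)))))}

lemma log_one_add_sqrt_nonneg (t : ℝ) : 0 ≤ log (1 + √t) :=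
  log_nonneg (le_add_of_nonneg_right (sqrt_nonneg t))

lemma nonneg_of_mem_agmonPathLengths {n m : Fin d → ZMod K} {s : ℝ}
    (hs : s ∈ agmonPathLengths d K w n m) : 0 ≤ s := by
  obtain ⟨k, γ, -, -, -, rfl⟩ := hs
  exact sum_nonneg fun j _ => log_one_add_sqrt_nonneg _

lemma zero_mem_agmonPathLengths (n : Fin d → ZMod K) : 0 ∈ agmonPathLengths d K w n n :=
  ⟨0, fun _ => n, rfl, rfl, fun _ h => absurd h (Nat.not_lt_zero _), by simp⟩

lemma add_mem_agmonPathLengths {n m p : Fin d → ZMod K} (hadj : adj d K m n) {s : ℝ}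
    (hs : s ∈ agmonPathLengths d K w m p) :
    log (1 + √(min (w n) (w m))) + s ∈ agmonPathLengths d K w n p := by
  obtain ⟨k, γ, rfl, rfl, hγ, rfl⟩ := hs
  refine ⟨k + 1, fun j => if j = 0 then n else γ (j - 1), rfl, by simp, ?_, ?_⟩
  · rintro (_ | j) hj
    · simpa using hadj
    · simpa using hγ j (by omega)
  · rw [sum_range_succ']
    simp [add_comm]

lemma rho_nonneg (n m : Fin d → ZMod K) : 0 ≤ rho d K w n m :=
  Real.sInf_nonneg fun _ => nonneg_of_mem_agmonPathLengths

lemma rho_self (n : Fin d → ZMod K) : rho d K w n n = 0 :=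
  le_antisymm (csInf_le ⟨0, fun _ => nonneg_of_mem_agmonPathLengths⟩ (zero_mem_agmonPathLengths n))
    (rho_nonneg n n)

lemma rho_le_add_rho {n m : Fin d → ZMod K} (hadj : adj d K m n) (p : Fin d → ZMod K) :
    rho d K w n p ≤ log (1 + √(min (w n) (w m))) + rho d K w m p :=
  sInf_le_add_sInf (log_one_add_sqrt_nonneg _) ⟨0, fun _ => nonneg_of_mem_agmonPathLengths⟩
    (fun ⟨_, hs⟩ => ⟨_, add_mem_agmonPathLengths (adj_symm hadj) hs⟩)
    fun _ hs => ⟨_, add_mem_agmonPathLengths hadj hs, le_rfl⟩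

lemma agmonDist_nonneg (J : Set (Fin d → ZMod K)) (n : Fin d → ZMod K) :
    0 ≤ agmonDist d K w J n :=
  Real.sInf_nonneg fun _ ⟨_, _, hs⟩ => hs ▸ rho_nonneg _ _

lemma agmonDist_eq_zero_of_mem {J : Set (Fin d → ZMod K)} {n : Fin d → ZMod K} (hn : n ∈ J) :
    agmonDist d K w J n = 0 :=
  le_antisymm (csInf_le ⟨0, fun _ ⟨_, _, hs⟩ => hs ▸ rho_nonneg _ _⟩ ⟨n, hn, (rho_self n).symm⟩)
    (agmonDist_nonneg J n)

lemma agmonDist_le_add_agmonDist (J : Set (Fin d → ZMod K)) {n m : Fin d → ZMod K}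
    (hadj : adj d K m n) :
    agmonDist d K w J n ≤ log (1 + √(min (w n) (w m))) + agmonDist d K w J m :=
  sInf_le_add_sInf (log_one_add_sqrt_nonneg _) ⟨0, fun _ ⟨_, _, hs⟩ => hs ▸ rho_nonneg _ _⟩
    (fun ⟨_, p, hp, _⟩ => ⟨_, p, hp, rfl⟩)
    fun _ ⟨p, hp, hs⟩ => ⟨_, ⟨p, hp, rfl⟩, hs ▸ rho_le_add_rho hadj p⟩

lemma abs_agmonDist_sub_le (J : Set (Fin d → ZMod K)) {n m : Fin d → ZMod K}
    (hadj : adj d K m n) :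
    |agmonDist d K w J m - agmonDist d K w J n| ≤ log (1 + √(min (w n) (w m))) := by
  have h₁ := agmonDist_le_add_agmonDist J (w := w) hadj
  have h₂ := agmonDist_le_add_agmonDist J (w := w) (adj_symm hadj)
  rw [min_comm] at h₂
  exact abs_sub_le_iff.mpr ⟨by linarith, by linarith⟩

end Agmon

section Schrodinger

variable {d K : ℕ}

lemma laplacian_nonpos_of_isMin {u : (Fin d → ZMod K) → ℝ} {m : Fin d → ZMod K}
    (hm : ∀ n, u m ≤ u n) : ∑ i, (2 * u m - u (m + e d K i) - u (m - e d K i)) ≤ 0 :=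
  sum_nonpos fun i _ => by linarith [hm (m + e d K i), hm (m - e d K i)]


lemma opH_sign_mul {s : (Fin d → ZMod K) → ℝ} (hs : ∀ n i, s (n + e d K i) = -s n) (c : ℝ)
    (v φ : (Fin d → ZMod K) → ℝ) (n : Fin d → ZMod K) :
    opH d K (fun p => c - v p) (fun p => s p * φ p) n
      = s n * ((4 * d + c) * φ n - opH d K v φ n) := by
  have hs' : ∀ i, s (n - e d K i) = -s n := fun i => by
    rw [← neg_neg (s (n - e d K i)), ← hs, sub_add_cancel]
  have hterm : ∀ i, 2 * (s n * φ n) - s (n + e d K i) * φ (n + e d K i)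
      - s (n - e d K i) * φ (n - e d K i)
      = s n * (4 * φ n) - s n * (2 * φ n - φ (n + e d K i) - φ (n - e d K i)) := fun i => by
    rw [hs, hs']; ring
  simp only [opH, hterm, sum_sub_distrib, ← mul_sum, sum_const, card_univ, Fintype.card_fin,
    nsmul_eq_mul]
  ring

lemma exists_staggered_sign (hK : Even K) :
    ∃ s : (Fin d → ZMod K) → ℝ, (∀ n i, s (n + e d K i) = -s n) ∧ ∀ n, s n ^ 2 = 1 := by
  -- `χ x = (-1) ^ x`, well defined because `K` is even.
  let χ : ZMod K → ℝ := fun x => if ZMod.castHom hK.two_dvd (ZMod 2) x = 0 then 1 else -1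
  have hχ : ∀ x, χ (x + 1) = -χ x := fun x => by
    simp only [χ, map_add, map_one]
    generalize ZMod.castHom hK.two_dvd (ZMod 2) x = y
    obtain rfl | rfl : y = 0 ∨ y = 1 := by revert y; decide
    · simp
    · simp [show (1 : ZMod 2) + 1 = 0 by decide]
  refine ⟨fun n => χ (∑ j, n j), fun n i => ?_, fun n => by simp only [χ]; split_ifs <;> norm_num⟩
  have hsum : ∑ j, (n + e d K i) j = ∑ j, n j + 1 := by simp [e, sum_add_distrib]
  simp only [hsum, hχ]

lemma exists_dual_eigenfunction (hK : Even K) (c : ℝ) {v φ : (Fin d → ZMod K) → ℝ} {μ : ℝ}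
    (heig : ∀ n, opH d K v φ n = μ * φ n) :
    ∃ ψ : (Fin d → ZMod K) → ℝ,
      (∀ n, opH d K (fun p => c - v p) ψ n = (4 * d + c - μ) * ψ n) ∧ ∀ n, ψ n ^ 2 = φ n ^ 2 := by
  obtain ⟨s, hs, hs_sq⟩ := exists_staggered_sign (d := d) hK
  refine ⟨fun p => s p * φ p, fun n => ?_, fun n => by rw [mul_pow, hs_sq, one_mul]⟩
  rw [opH_sign_mul hs, heig]
  ring

variable [NeZero K]

lemma sum_mul_opH (v ψ ξ : (Fin d → ZMod K) → ℝ) :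
    ∑ n, ψ n * opH d K v ξ n
      = ∑ i, ∑ n, (ψ (n + e d K i) - ψ n) * (ξ (n + e d K i) - ξ n)
        + ∑ n, v n * ψ n * ξ n := by
  have hsplit : ∀ i, ∑ n, ψ n * (2 * ξ n - ξ (n + e d K i) - ξ (n - e d K i))
      = ∑ n, ψ n * (ξ n - ξ (n + e d K i)) + ∑ n, ψ n * (ξ n - ξ (n - e d K i)) := fun i => by
    rw [← sum_add_distrib]
    exact sum_congr rfl fun n _ => by ring
  have hshift : ∀ i, ∑ n, ψ n * (ξ n - ξ (n - e d K i))
      = ∑ n, ψ (n + e d K i) * (ξ (n + e d K i) - ξ n) := fun i => by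
    rw [← sum_comp_add_right (fun m => ψ m * (ξ m - ξ (m - e d K i))) (e d K i)]
    simp
  simp only [opH, mul_add, mul_sum, sum_add_distrib]
  rw [sum_comm]
  congr 1
  · refine sum_congr rfl fun i _ => ?_
    rw [hsplit, hshift, ← sum_add_distrib]
    exact sum_congr rfl fun n _ => by ring
  · exact sum_congr rfl fun n _ => by ring

lemma sum_mul_opH_mul_sub (v f φ : (Fin d → ZMod K) → ℝ) :
    ∑ n, f n * φ n * opH d K v (fun n => f n * φ n) n - ∑ n, f n ^ 2 * φ n * opH d K v φ n
      = ∑ i, ∑ n, φ n * φ (n + e d K i) * (f (n + e d K i) - f n) ^ 2 := by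
  rw [sum_mul_opH, sum_mul_opH, add_sub_add_comm, ← sum_sub_distrib, ← sum_sub_distrib]
  have hpot : ∑ n, (v n * (f n * φ n) * (f n * φ n) - v n * (f n ^ 2 * φ n) * φ n) = 0 :=
    sum_eq_zero fun n _ => by ring
  rw [hpot, add_zero]
  refine sum_congr rfl fun i _ => ?_
  rw [← sum_sub_distrib]
  exact sum_congr rfl fun n _ => by ring

lemma sq_div_sub_sq_div_mul_sub_le {x y : ℝ} (hx : 0 < x) (hy : 0 < y) (a b : ℝ) :
    (b ^ 2 / y - a ^ 2 / x) * (y - x) ≤ (b - a) * (b - a) := by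
  rw [div_sub_div _ _ hy.ne' hx.ne', div_mul_eq_mul_div, div_le_iff₀ (mul_pos hy hx)]
  nlinarith [sq_nonneg (b * x - a * y)]

lemma sum_sq_div_mul_opH_le {v u : (Fin d → ZMod K) → ℝ} (hu : ∀ n, 0 < u n)
    (ψ : (Fin d → ZMod K) → ℝ) :
    ∑ n, ψ n ^ 2 / u n * opH d K v u n ≤ ∑ n, ψ n * opH d K v ψ n := by
  rw [sum_mul_opH, sum_mul_opH]
  refine add_le_add (sum_le_sum fun i _ => sum_le_sum fun n _ => ?_) (le_of_eq ?_)
  · exact sq_div_sub_sq_div_mul_sub_le (hu n) (hu _) _ _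
  · exact sum_congr rfl fun n _ => by field_simp [(hu n).ne']

lemma sum_one_div_sub_mul_sq_le {v u φ : (Fin d → ZMod K) → ℝ} {μ : ℝ} (hu : ∀ n, 0 < u n)
    (hland : ∀ n, opH d K v u n = 1) (heig : ∀ n, opH d K v φ n = μ * φ n)
    (f : (Fin d → ZMod K) → ℝ) :
    ∑ n, (1 / u n - μ) * (f n * φ n) ^ 2
      ≤ ∑ i, ∑ n, φ n * φ (n + e d K i) * (f (n + e d K i) - f n) ^ 2 := by
  have hlandscape := sum_sq_div_mul_opH_le (v := v) hu fun n => f n * φ n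
  rw [← sum_mul_opH_mul_sub v]
  simp only [hland, heig] at hlandscape ⊢
  calc ∑ n, (1 / u n - μ) * (f n * φ n) ^ 2
      = ∑ n, (f n * φ n) ^ 2 / u n * 1 - ∑ n, f n ^ 2 * φ n * (μ * φ n) := by
        rw [← sum_sub_distrib]
        exact sum_congr rfl fun n _ => by ring
    _ ≤ _ := by linarith

lemma one_le_mul_of_opH_eq_one {v u : (Fin d → ZMod K) → ℝ} {c : ℝ} (hv : ∀ n, 0 ≤ v n)
    (hvc : ∀ n, v n ≤ c) (hu : ∀ n, opH d K v u n = 1) (n : Fin d → ZMod K) :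
    1 ≤ c * u n := by
  obtain ⟨m, hm⟩ := Finite.exists_min u
  have hvm : 1 ≤ v m * u m := by
    have := hu m
    rw [opH] at this
    linarith [laplacian_nonpos_of_isMin hm]
  have hum : 0 < u m := pos_of_mul_pos_right (one_pos.trans_le hvm) (hv m)
  calc 1 ≤ v m * u m := hvm
    _ ≤ c * u m := mul_le_mul_of_nonneg_right (hvc m) hum.le
    _ ≤ c * u n := mul_le_mul_of_nonneg_left (hm n) ((hv m).trans (hvc m))

lemma sum_sub_sq_le (φ : (Fin d → ZMod K) → ℝ) (i : Fin d) :
    ∑ n, (φ (n + e d K i) - φ n) * (φ (n + e d K i) - φ n) ≤ 4 * ∑ n, φ n ^ 2 := by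
  have hshift : ∑ n, φ (n + e d K i) ^ 2 = ∑ n, φ n ^ 2 :=
    sum_comp_add_right (fun n => φ n ^ 2) _
  calc ∑ n, (φ (n + e d K i) - φ n) * (φ (n + e d K i) - φ n)
      ≤ ∑ n, (2 * φ (n + e d K i) ^ 2 + 2 * φ n ^ 2) :=
        sum_le_sum fun n _ => by nlinarith [sq_nonneg (φ (n + e d K i) + φ n)]
    _ = 4 * ∑ n, φ n ^ 2 := by rw [sum_add_distrib, ← mul_sum, ← mul_sum, hshift]; ring

lemma le_four_mul_add_of_opH_eq_mul {v φ : (Fin d → ZMod K) → ℝ} {c μ : ℝ}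
    (hvc : ∀ n, v n ≤ c) (hφ : φ ≠ 0) (heig : ∀ n, opH d K v φ n = μ * φ n) :
    μ ≤ 4 * d + c := by
  obtain ⟨m, hm⟩ := Function.ne_iff.mp hφ
  have hpos : 0 < ∑ n, φ n ^ 2 :=
    sum_pos' (fun n _ => sq_nonneg _) ⟨m, mem_univ m, sq_pos_of_ne_zero hm⟩
  have hkinetic : ∑ i : Fin d, ∑ n, (φ (n + e d K i) - φ n) * (φ (n + e d K i) - φ n)
      ≤ 4 * d * ∑ n, φ n ^ 2 := by
    calc _ ≤ ∑ _i : Fin d, 4 * ∑ n, φ n ^ 2 := sum_le_sum fun i _ => sum_sub_sq_le φ i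
      _ = _ := by rw [sum_const, card_univ, Fintype.card_fin, nsmul_eq_mul]; ring
  have hpot : ∑ n, v n * φ n * φ n ≤ c * ∑ n, φ n ^ 2 := by
    rw [mul_sum]
    exact sum_le_sum fun n _ => by nlinarith [hvc n, sq_nonneg (φ n)]
  have hquad := sum_mul_opH v φ φ
  have hμ : ∑ n, φ n * opH d K v φ n = μ * ∑ n, φ n ^ 2 := by
    rw [mul_sum]
    exact sum_congr rfl fun n _ => by rw [heig]; ring
  have : μ * ∑ n, φ n ^ 2 ≤ (4 * d + c) * ∑ n, φ n ^ 2 := by linarith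
  exact le_of_mul_le_mul_right this hpos

lemma sum_mul_exp_sub_sq_le {α : ℝ} {w h ψ : (Fin d → ZMod K) → ℝ} (hα0 : 0 ≤ α) (hα1 : α ≤ 1)
    (hw : ∀ n, 0 ≤ w n)
    (hh : ∀ n i, |h (n + e d K i) - h n| ≤ log (1 + √(min (w n) (w (n + e d K i))))) :
    ∑ i, ∑ n, ψ n * ψ (n + e d K i) * (exp (α * h (n + e d K i)) - exp (α * h n)) ^ 2
      ≤ α ^ 2 * d * ∑ n, w n * exp (2 * α * h n) * ψ n ^ 2 := by
  set W := fun n => w n * exp (2 * α * h n) * ψ n ^ 2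
  have hedge : ∀ i n, ψ n * ψ (n + e d K i) * (exp (α * h (n + e d K i)) - exp (α * h n)) ^ 2
      ≤ α ^ 2 / 2 * (W n + W (n + e d K i)) := fun i n => by
    set m := n + e d K i
    set D := (exp (α * h m) - exp (α * h n)) ^ 2
    have ht : 0 ≤ min (w n) (w m) := le_min (hw n) (hw m)
    have hDn : D ≤ α ^ 2 * w n * exp (2 * α * h n) :=
      (sq_exp_mul_sub_exp_mul_le hα0 hα1 ht (hh n i)).trans (by gcongr; exact min_le_left _ _)
    have hDm : D ≤ α ^ 2 * w m * exp (2 * α * h m) := by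
      have := sq_exp_mul_sub_exp_mul_le hα0 hα1 ht (abs_sub_comm (h m) (h n) ▸ hh n i)
      rw [← neg_sub, neg_sq] at this
      exact this.trans (by gcongr; exact min_le_right _ _)
    have hcross : 2 * ψ n * ψ m * D ≤ (ψ n ^ 2 + ψ m ^ 2) * D :=
      mul_le_mul_of_nonneg_right (two_mul_le_add_sq _ _) (sq_nonneg _)
    nlinarith [mul_le_mul_of_nonneg_left hDn (sq_nonneg (ψ n)),
      mul_le_mul_of_nonneg_left hDm (sq_nonneg (ψ m))]
  calc _ ≤ ∑ i : Fin d, ∑ n, α ^ 2 / 2 * (W n + W (n + e d K i)) :=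
        sum_le_sum fun i _ => sum_le_sum fun n _ => hedge i n
    _ = ∑ _i : Fin d, α ^ 2 * ∑ n, W n := sum_congr rfl fun i _ => by
        rw [← mul_sum, sum_add_distrib, sum_comp_add_right W]; ring
    _ = _ := by rw [sum_const, card_univ, Fintype.card_fin, nsmul_eq_mul]; ring

lemma sum_agmon_energy_le {v u ψ w h : (Fin d → ZMod K) → ℝ} {μ α : ℝ} (hu : ∀ n, 0 < u n)
    (hland : ∀ n, opH d K v u n = 1) (heig : ∀ n, opH d K v ψ n = μ * ψ n)
    (hα0 : 0 ≤ α) (hα1 : α ≤ 1) (hw : ∀ n, 0 ≤ w n)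
    (hh : ∀ n i, |h (n + e d K i) - h n| ≤ log (1 + √(min (w n) (w (n + e d K i))))) :
    ∑ n, (1 / u n - μ) * exp (2 * α * h n) * ψ n ^ 2
      ≤ α ^ 2 * d * ∑ n, w n * exp (2 * α * h n) * ψ n ^ 2 :=
  calc _ = ∑ n, (1 / u n - μ) * (exp (α * h n) * ψ n) ^ 2 :=
        sum_congr rfl fun n _ => by rw [mul_pow, sq (exp _), ← exp_add]; ring_nf
    _ ≤ _ := sum_one_div_sub_mul_sq_le hu hland heig _
    _ ≤ _ := sum_mul_exp_sub_sq_le hα0 hα1 hw hh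

theorem agmon_decay {v u ψ : (Fin d → ZMod K) → ℝ} {Vmax μ δ α : ℝ}
    (hv : ∀ n, 0 ≤ v n ∧ v n ≤ Vmax) (hland : ∀ n, opH d K v u n = 1)
    (heig : ∀ n, opH d K v ψ n = μ * ψ n) (hμ0 : 0 ≤ μ) (hμ : μ ≤ Vmax) (hδ : 0 ≤ δ)
    (hα0 : 0 ≤ α) (hα1 : α ≤ 1) (hk : α ^ 2 * d ≤ 1) :
    δ * (1 - α ^ 2 * d) * ∑ n ∈ univ.filter (fun n => 1 ≤ agmonDist d K
        (fun p => max (1 / u p - μ) 0) {p | 1 / u p ≤ μ + δ} n),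
        exp (2 * α * agmonDist d K (fun p => max (1 / u p - μ) 0) {p | 1 / u p ≤ μ + δ} n)
          * ψ n ^ 2
      ≤ (1 + α ^ 2 * d) * Vmax * ∑ n, ψ n ^ 2 := by
  set J := {p | 1 / u p ≤ μ + δ}
  have hVu := one_le_mul_of_opH_eq_one (fun n => (hv n).1) (fun n => (hv n).2) hland
  have hu : ∀ n, 0 < u n := fun n => pos_of_mul_pos_right (one_pos.trans_le (hVu n)) (by linarith)
  have hinv : ∀ n, 1 / u n ≤ Vmax := fun n => (div_le_iff₀ (hu n)).mpr (hVu n)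
  have hzero : ∀ n, 1 / u n - μ ≤ δ → agmonDist d K (fun p => max (1 / u p - μ) 0) J n = 0 :=
    fun n hn => agmonDist_eq_zero_of_mem (show 1 / u n ≤ μ + δ by linarith)
  refine sum_tail_le_of_energy_le (by positivity) hk hδ (fun n => sq_nonneg _)
    (fun n => (exp_pos _).le) (fun n => abs_le.mpr ⟨?_, ?_⟩) (fun n hn => ?_) (fun n hn => ?_)
    (sum_agmon_energy_le hu hland heig hα0 hα1 (fun n => le_max_right _ _)
      fun n i => abs_agmonDist_sub_le J ⟨i, Or.inl rfl⟩)
  · linarith [one_div_pos.mpr (hu n)]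
  · linarith [hinv n]
  · rw [hzero n hn, mul_zero, exp_zero]
  · by_contra hle
    have := (mem_filter.mp hn).2
    rw [hzero n (not_lt.mp hle)] at this
    norm_num at this

end Schrodinger

/-- Dual Agmon estimate for high-energy modes: for `K ≥ 3` even, an eigenpair
`(μ, φ)` of `H = -Δ + V` with `μ ≥ 4d + δ` satisfies
`∑_{h̃_n ≥ 1} e^{2αh̃_n} φ_n² ≤ (C₀/δ) ∑_n φ_n²`, where `h̃` is the Agmon
distance built from the dual landscape `ũ` (solving `H̃ũ = 1` with
`H̃ = -Δ + (V_max - V)`), `μ̃ = 4d + V_max - μ`, and `C, C₀` are the same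
constants as in the low-energy Agmon theorem. -/
theorem dual_agmon_decay :
    ∃ C : ℝ, 0 < C ∧
      ∀ (d K : ℕ) [NeZero K], 3 ≤ K → Even K →
      ∀ (Vmax : ℝ) (v ut φ : (Fin d → ZMod K) → ℝ) (μ δ α : ℝ),
        0 < Vmax → (∀ n, 0 ≤ v n ∧ v n ≤ Vmax) → (∃ n, v n ≠ 0) →
        (∀ n, opH d K (fun p => Vmax - v p) ut n = 1) →
        φ ≠ 0 → (∀ n, opH d K v φ n = μ * φ n) →
        0 < δ → 4 * d + δ ≤ μ →
        0 < α → α < 1 / Real.sqrt (C * d) →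
        ∑ n ∈ Finset.univ.filter (fun n : Fin d → ZMod K =>
            1 ≤ agmonDist d K
              (fun p => max (1 / ut p - (4 * d + Vmax - μ)) 0)
              {p : Fin d → ZMod K | 1 / ut p ≤ 4 * d + Vmax - μ + δ} n),
          Real.exp (2 * α * agmonDist d K
              (fun p => max (1 / ut p - (4 * d + Vmax - μ)) 0)
              {p : Fin d → ZMod K | 1 / ut p ≤ 4 * d + Vmax - μ + δ} n) *
            (φ n) ^ 2 ≤
        ((4 * Real.exp (2 * α) * d +
            (2 + 6 * C * α ^ 2) * Real.exp (2 * α) * d * Vmax) /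
          (1 - C * d * α ^ 2)) / δ *
          ∑ n : Fin d → ZMod K, (φ n) ^ 2 := by
  refine ⟨1, one_pos, fun d K _ _ hK Vmax v ut φ μ δ α hV hv _ hland hφ heig hδ hμ hα hαd => ?_⟩
  simp only [one_mul, mul_one] at hαd ⊢
  have hd : (1 : ℝ) ≤ d := by
    rcases Nat.eq_zero_or_pos d with rfl | hd
    · simp at hαd; linarith
    · exact_mod_cast hd
  have hk : α ^ 2 * d < 1 := sq_mul_lt_one_of_lt_one_div_sqrt (by linarith) hα.le hαd
  have hμ_le := le_four_mul_add_of_opH_eq_mul (fun n => (hv n).2) hφ heig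
  obtain ⟨ψ, hψ, hψφ⟩ := exists_dual_eigenfunction hK Vmax heig
  have hdecay := agmon_decay (fun n => ⟨sub_nonneg.mpr (hv n).2, sub_le_self _ (hv n).1⟩)
    hland hψ (by linarith) (by linarith) hδ.le hα.le (by nlinarith) hk.le
  simp only [hψφ] at hdecay
  have hconst : (1 + α ^ 2 * d) * Vmax
      ≤ 4 * exp (2 * α) * d + (2 + 6 * α ^ 2) * exp (2 * α) * d * Vmax := by
    have he : 1 ≤ exp (2 * α) := one_le_exp (by positivity)
    nlinarith [mul_le_mul_of_nonneg_left he (by positivity : 0 ≤ (2 + 6 * α ^ 2) * d * Vmax),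
      mul_nonneg (by nlinarith : 0 ≤ 2 * (d : ℝ) - 1 + 5 * α ^ 2 * d) hV.le]
  rw [div_div, div_mul_eq_mul_div, le_div_iff₀ (mul_pos (by linarith) hδ)]
  nlinarith [mul_le_mul_of_nonneg_right hconst (sum_nonneg fun n _ => sq_nonneg (φ n) :
    0 ≤ ∑ n, φ n ^ 2)]
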